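/- The semigroup N·A is an s-gluing of N·A^{E_1} and N·A^{E_2} if and only if pos(A) is the direct sum of pos(A^{E_1}) and pos(A^{E_2}). -/

import Mathlib

open scoped BigOperators

/-- The cone of nonnegative rational combinations of elements of `S`. -/
def posSpan {n : ℕ} (S : Set (Fin n → ℚ)) : Set (Fin n → ℚ) :=
  {x | ∃ (k : ℕ) (c : Fin k → ℚ) (b : Fin k → (Fin n → ℚ)),
    (∀ i, 0 ≤ c i) ∧ (∀ i, b i ∈ S) ∧ x = ∑ i, c i • b i}

/-- A rational polyhedral cone: `posSpan` of a finite set. -/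
def IsPolyCone {n : ℕ} (σ : Set (Fin n → ℚ)) : Prop :=
  ∃ B : Finset (Fin n → ℚ), σ = posSpan (B : Set (Fin n → ℚ))

/-- A cone is strongly convex if `σ ∩ (-σ) = {0}`. -/
def StronglyConvex {n : ℕ} (σ : Set (Fin n → ℚ)) : Prop :=
  ∀ x, x ∈ σ → -x ∈ σ → x = 0

/-- dot product in `ℚ^n`. -/
def dotQ {n : ℕ} (c x : Fin n → ℚ) : ℚ := ∑ i, c i * x i

/-- `R` is an extreme ray of `σ`: a one-dimensional face cut out by a
supporting vector `c`. -/
def IsExtremeRay {n : ℕ} (σ R : Set (Fin n → ℚ)) : Prop :=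
  ∃ c : Fin n → ℚ, (∀ x ∈ σ, 0 ≤ dotQ c x) ∧
    R = {x ∈ σ | dotQ c x = 0} ∧
    Module.finrank ℚ (Submodule.span ℚ R) = 1

/-- The dimension of a cone: dimension of its rational linear span. -/
noncomputable def coneDim {n : ℕ} (σ : Set (Fin n → ℚ)) : ℕ :=
  Module.finrank ℚ (Submodule.span ℚ σ)

/-- `σ` is the direct sum of `σ₁` and `σ₂` along `a`. -/
def IsDirectSumAlong {n : ℕ} (σ₁ σ₂ σ : Set (Fin n → ℚ)) (a : Fin n → ℚ) : Prop :=
  a ∈ σ₁ ∩ σ₂ ∧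
  Submodule.span ℚ σ₁ ⊓ Submodule.span ℚ σ₂ = Submodule.span ℚ {a} ∧
  σ = posSpan (σ₁ ∪ σ₂)

/-- `σ` is a direct sum of `σ₁` and `σ₂`. -/
def IsDirectSum {n : ℕ} (σ₁ σ₂ σ : Set (Fin n → ℚ)) : Prop :=
  ∃ a, IsDirectSumAlong σ₁ σ₂ σ a

/-- `a` lies on an extreme ray of `σ`. -/
def OnExtremeRay {n : ℕ} (σ : Set (Fin n → ℚ)) (a : Fin n → ℚ) : Prop :=
  ∃ R, IsExtremeRay σ R ∧ a ∈ R

/-- The ray `ℚ⁺ r`. -/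
def rayOf {n : ℕ} (r : Fin n → ℚ) : Set (Fin n → ℚ) :=
  {x | ∃ q : ℚ, 0 ≤ q ∧ x = q • r}

/-- Coordinatewise cast of an integer vector to a rational vector. -/
def ratify {n : ℕ} (v : Fin n → ℤ) : Fin n → ℚ := fun j => (v j : ℚ)

/-- The subsemigroup (submonoid) of ℤ^n generated by a set. -/
def natSpan {n : ℕ} (A : Set (Fin n → ℤ)) : AddSubmonoid (Fin n → ℤ) :=
  AddSubmonoid.closure A

/-- The subgroup of ℤ^n generated by a set. -/
def intSpan {n : ℕ} (A : Set (Fin n → ℤ)) : AddSubgroup (Fin n → ℤ) :=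
  AddSubgroup.closure A

/-- The semigroup generated by `A` has no invertible elements (is affine). -/
def IsAffineSemigroup {n : ℕ} (A : Set (Fin n → ℤ)) : Prop :=
  ∀ x ∈ natSpan A, -x ∈ natSpan A → x = 0

/-- `ℕ(A₁ ∪ A₂)` is the gluing of `ℕA₁` and `ℕA₂`. -/
def IsGluing {n : ℕ} (A₁ A₂ : Set (Fin n → ℤ)) : Prop :=
  ∃ a : Fin n → ℤ, a ≠ 0 ∧ a ∈ natSpan A₁ ⊓ natSpan A₂ ∧
    intSpan {a} = intSpan A₁ ⊓ intSpan A₂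

/-- `ℕ(A₁ ∪ A₂)` is the s-gluing of `ℕA₁` and `ℕA₂`. -/
def IsSGluing {n : ℕ} (A₁ A₂ : Set (Fin n → ℤ)) : Prop :=
  ∃ a : Fin n → ℤ, intSpan {a} = intSpan A₁ ⊓ intSpan A₂ ∧
    ∃ t : ℕ, 0 < t ∧ (t : ℤ) • a ∈ natSpan A₁ ⊓ natSpan A₂

/-- The gcd of the coordinates of an integer vector. -/
def coordGcd {n : ℕ} (a : Fin n → ℤ) : ℕ :=
  Finset.univ.gcd fun i => (a i).natAbs

/-!
Write `L = ℤA^{E₁} ∩ ℤA^{E₂}`. The cone `pos(A)` is always generated by `pos(A^{E₁}) ∪ pos(A^{E₂})`,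
and clearing denominators shows that every point of `ℚA^{E₁} ∩ ℚA^{E₂}` (resp. of
`pos(A^{E₁}) ∩ pos(A^{E₂})`) has a positive integer multiple in `L` (resp. in
`ℕA^{E₁} ∩ ℕA^{E₂}`). Hence `L = ℤa` forces `ℚA^{E₁} ∩ ℚA^{E₂} = ℚa`, and `t a ∈ ℕA^{E_i}` puts
`a` in both cones. Conversely, if the rational spans meet in a line `ℚr`, then `L` embeds into
`ℤ` through a coordinate where `r` does not vanish, so `L = ℤa` is cyclic; a common multiple of `r`
in both semigroups is then `k a` with `k ≠ 0` (unless everything is zero), and replacing `a` by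
`-a` makes `k` positive.
-/

lemma AddSubgroup.exists_zmultiples_eq_and_pos_zsmul_eq {G : Type*} [AddGroup G] {a w : G}
    (hw : w ∈ AddSubgroup.zmultiples a) (ha : w = 0 → a = 0) :
    ∃ b, AddSubgroup.zmultiples b = AddSubgroup.zmultiples a ∧
      ∃ t : ℕ, 0 < t ∧ (t : ℤ) • b = w := by
  obtain ⟨k, rfl⟩ := AddSubgroup.mem_zmultiples_iff.1 hw
  rcases lt_trichotomy k 0 with hk | rfl | hk
  · refine ⟨-a, AddSubgroup.zmultiples_neg, (-k).toNat, by omega, ?_⟩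
    rw [Int.toNat_of_nonneg (by omega), zsmul_neg, neg_zsmul, neg_neg]
  · obtain rfl := ha (zero_smul ℤ a)
    exact ⟨0, rfl, 1, one_pos, by simp⟩
  · exact ⟨a, rfl, k.toNat, by omega, by rw [Int.toNat_of_nonneg hk.le]⟩

section

variable {n : ℕ}

lemma ratify_zsmul (k : ℤ) (u : Fin n → ℤ) : ratify (k • u) = (k : ℚ) • ratify u := by
  funext j; simp [ratify]

lemma ratify_injective : Function.Injective (ratify (n := n)) :=
  fun _ _ h => funext fun j => Int.cast_injective (congrFun h j)

@[simp] lemma ratify_zero : ratify (0 : Fin n → ℤ) = 0 :=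
  funext fun _ => Int.cast_zero

@[simp] lemma ratify_eq_zero {v : Fin n → ℤ} : ratify v = 0 ↔ v = 0 :=
  ratify_injective.eq_iff' ratify_zero

def ratifyHom : (Fin n → ℤ) →+ (Fin n → ℚ) := AddMonoidHom.compLeft (Int.castAddHom ℚ) (Fin n)

@[simp] lemma coe_ratifyHom : ⇑(ratifyHom (n := n)) = ratify := rfl

lemma posSpan_eq_hull (S : Set (Fin n → ℚ)) : posSpan S = PointedCone.hull ℚ S := by
  ext x
  rw [SetLike.mem_coe, Submodule.mem_span_set']
  constructor
  · rintro ⟨k, c, b, hc, hb, rfl⟩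
    exact ⟨k, fun i => ⟨c i, hc i⟩, fun i => ⟨b i, hb i⟩, rfl⟩
  · rintro ⟨k, c, b, rfl⟩
    exact ⟨k, fun i => c i, fun i => b i, fun i => (c i).2, fun i => (b i).2, rfl⟩

lemma posSpan_union_posSpan (S T : Set (Fin n → ℚ)) :
    posSpan (posSpan S ∪ posSpan T) = posSpan (S ∪ T) := by
  simp only [posSpan_eq_hull, Submodule.span_union, Submodule.span_eq]

lemma span_posSpan (S : Set (Fin n → ℚ)) : Submodule.span ℚ (posSpan S) = Submodule.span ℚ S := by
  rw [posSpan_eq_hull, Submodule.span_span_of_tower]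

lemma ratify_mem_posSpan {A : Set (Fin n → ℤ)} {v : Fin n → ℤ} (hv : v ∈ natSpan A) :
    ratify v ∈ posSpan (ratify '' A) := by
  rw [posSpan_eq_hull]
  have : natSpan A ≤ (PointedCone.hull ℚ (ratify '' A)).toAddSubmonoid.comap ratifyHom :=
    AddSubmonoid.closure_le.2 fun a ha => PointedCone.subset_hull ⟨a, ha, rfl⟩
  exact this hv

lemma ratify_mem_span {A : Set (Fin n → ℤ)} {v : Fin n → ℤ} (hv : v ∈ intSpan A) :
    ratify v ∈ Submodule.span ℚ (ratify '' A) := by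
  have : intSpan A ≤ (Submodule.span ℚ (ratify '' A)).toAddSubgroup.comap ratifyHom :=
    AddSubgroup.closure_le _ |>.2 fun a ha => Submodule.subset_span ⟨a, ha, rfl⟩
  exact this hv

lemma ratify_mem_posSpan_of_zsmul_mem {A : Set (Fin n → ℤ)} {a : Fin n → ℤ} {t : ℕ} (ht : 0 < t)
    (h : (t : ℤ) • a ∈ natSpan A) : ratify a ∈ posSpan (ratify '' A) := by
  have := ratify_mem_posSpan h
  rw [ratify_zsmul, posSpan_eq_hull, Int.cast_natCast] at this
  rw [posSpan_eq_hull]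
  exact (PointedCone.smul_mem_iff _ (by exact_mod_cast ht)).1 this

lemma natSpan_le_intSpan (A : Set (Fin n → ℤ)) : natSpan A ≤ (intSpan A).toAddSubmonoid :=
  AddSubmonoid.closure_le.2 AddSubgroup.subset_closure

lemma exists_nat_mul_eq_int {ι : Type*} [Fintype ι] (c : ι → ℚ) :
    ∃ M : ℕ, 0 < M ∧ ∃ z : ι → ℤ, ∀ i, (z i : ℚ) = M * c i := by
  classical
  choose e he using fun i => Finset.dvd_prod_of_mem (fun j => (c j).den) (Finset.mem_univ i)
  refine ⟨∏ j, (c j).den, Finset.prod_pos fun j _ => (c j).pos, fun i => (c i).num * e i,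
    fun i => ?_⟩
  rw [he i]
  push_cast
  rw [mul_right_comm, Rat.den_mul_eq_num, mul_comm]

lemma exists_ratify_sum_eq_nsmul {ι : Type*} [Fintype ι] (c : ι → ℚ) (w : ι → Fin n → ℤ) :
    ∃ M : ℕ, 0 < M ∧ ∃ z : ι → ℤ, (∀ i, 0 ≤ c i → 0 ≤ z i) ∧
      ratify (∑ i, z i • w i) = (M : ℚ) • ∑ i, c i • ratify (w i) := by
  obtain ⟨M, hM, z, hz⟩ := exists_nat_mul_eq_int c
  refine ⟨M, hM, z, fun i hi => ?_, ?_⟩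
  · have : (0 : ℚ) ≤ z i := hz i ▸ mul_nonneg M.cast_nonneg hi
    exact_mod_cast this
  · rw [← coe_ratifyHom, map_sum, Finset.smul_sum]
    refine Finset.sum_congr rfl fun i _ => ?_
    rw [coe_ratifyHom, ratify_zsmul, hz i, smul_smul]

lemma exists_ratify_eq_nsmul_of_mem_posSpan {A : Set (Fin n → ℤ)} {x : Fin n → ℚ}
    (hx : x ∈ posSpan (ratify '' A)) :
    ∃ M : ℕ, 0 < M ∧ ∃ v ∈ natSpan A, ratify v = (M : ℚ) • x := by
  obtain ⟨k, c, b, hc, hb, rfl⟩ := hx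
  choose w hw hwb using hb
  simp only [← hwb]
  obtain ⟨M, hM, z, hz, hsum⟩ := exists_ratify_sum_eq_nsmul c w
  refine ⟨M, hM, ∑ i, z i • w i, sum_mem fun i _ => ?_, hsum⟩
  rw [← Int.toNat_of_nonneg (hz i (hc i)), natCast_zsmul]
  exact nsmul_mem (AddSubmonoid.subset_closure (hw i)) _

lemma exists_ratify_eq_nsmul_of_mem_span {A : Set (Fin n → ℤ)} {x : Fin n → ℚ}
    (hx : x ∈ Submodule.span ℚ (ratify '' A)) :
    ∃ M : ℕ, 0 < M ∧ ∃ v ∈ intSpan A, ratify v = (M : ℚ) • x := by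
  obtain ⟨k, c, b, rfl⟩ := Submodule.mem_span_set'.1 hx
  choose w hw hwb using fun i => (b i).2
  simp only [← hwb]
  obtain ⟨M, hM, z, -, hsum⟩ := exists_ratify_sum_eq_nsmul c w
  exact ⟨M, hM, ∑ i, z i • w i,
    sum_mem fun i _ => zsmul_mem (AddSubgroup.subset_closure (hw i)) _, hsum⟩

lemma exists_ratify_eq_nsmul_mem_inf {P₁ P₂ : AddSubmonoid (Fin n → ℤ)} {x : Fin n → ℚ}
    (h₁ : ∃ M : ℕ, 0 < M ∧ ∃ v ∈ P₁, ratify v = (M : ℚ) • x)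
    (h₂ : ∃ M : ℕ, 0 < M ∧ ∃ v ∈ P₂, ratify v = (M : ℚ) • x) :
    ∃ M : ℕ, 0 < M ∧ ∃ v ∈ P₁ ⊓ P₂, ratify v = (M : ℚ) • x := by
  obtain ⟨M₁, hM₁, v₁, hv₁, hx₁⟩ := h₁
  obtain ⟨M₂, hM₂, v₂, hv₂, hx₂⟩ := h₂
  have hv : ratify ((M₂ : ℤ) • v₁) = ((M₂ * M₁ : ℕ) : ℚ) • x := by
    rw [ratify_zsmul, hx₁, smul_smul]; push_cast; rfl
  have hv' : (M₂ : ℤ) • v₁ = (M₁ : ℤ) • v₂ := by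
    apply ratify_injective
    rw [hv, ratify_zsmul, hx₂, smul_smul]; push_cast; ring_nf
  refine ⟨M₂ * M₁, Nat.mul_pos hM₂ hM₁, (M₂ : ℤ) • v₁, ⟨?_, ?_⟩, hv⟩
  · exact natCast_zsmul v₁ M₂ ▸ nsmul_mem hv₁ M₂
  · exact hv' ▸ natCast_zsmul v₂ M₁ ▸ nsmul_mem hv₂ M₁

lemma span_inf_span_eq_span_singleton_of_intSpan {A₁ A₂ : Set (Fin n → ℤ)} {a : Fin n → ℤ}
    (h : intSpan {a} = intSpan A₁ ⊓ intSpan A₂) :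
    Submodule.span ℚ (ratify '' A₁) ⊓ Submodule.span ℚ (ratify '' A₂) = ℚ ∙ ratify a := by
  have ha : a ∈ intSpan A₁ ⊓ intSpan A₂ := h ▸ AddSubgroup.subset_closure rfl
  refine le_antisymm (fun x hx => ?_) ?_
  · obtain ⟨M, hM, v, hv, hvx⟩ := exists_ratify_eq_nsmul_mem_inf (P₁ := (intSpan A₁).toAddSubmonoid)
      (P₂ := (intSpan A₂).toAddSubmonoid)
      (exists_ratify_eq_nsmul_of_mem_span hx.1) (exists_ratify_eq_nsmul_of_mem_span hx.2)
    obtain ⟨k, rfl⟩ := AddSubgroup.mem_closure_singleton.1 (h ▸ hv : v ∈ intSpan {a})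
    have hMx : (M : ℚ) • x ∈ ℚ ∙ ratify a := by
      rw [← hvx, ratify_zsmul]
      exact Submodule.smul_mem _ _ (Submodule.mem_span_singleton_self _)
    exact (Submodule.smul_mem_iff _ (by positivity)).1 hMx
  · rw [Submodule.span_singleton_le_iff_mem]
    exact ⟨ratify_mem_span ha.1, ratify_mem_span ha.2⟩

lemma exists_zmultiples_eq_of_ratify_mem_span_singleton (G : AddSubgroup (Fin n → ℤ))
    (r : Fin n → ℚ) (h : ∀ g ∈ G, ratify g ∈ ℚ ∙ r) : ∃ a, AddSubgroup.zmultiples a = G := by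
  rcases eq_or_ne r 0 with rfl | hr
  · refine ⟨0, ?_⟩
    rw [AddSubgroup.zmultiples_zero_eq_bot, eq_comm, AddSubgroup.eq_bot_iff_forall]
    intro g hg
    simpa using h g hg
  obtain ⟨i, hi⟩ := Function.ne_iff.1 hr
  -- an element of `G` is a rational multiple of `r`, so it is determined by its `i`-th coordinate
  have hinj : Function.Injective ((Pi.evalAddMonoidHom (fun _ => ℤ) i).comp G.subtype) := by
    rw [injective_iff_map_eq_zero]
    intro g hg
    obtain ⟨q, hq⟩ := Submodule.mem_span_singleton.1 (h g g.2)
    have hq0 : q = 0 := by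
      have := congrFun hq i
      simp_all [ratify]
    ext1
    simpa [hq0] using hq.symm
  exact (G.isAddCyclic_iff_exists_zmultiples_eq_top).1 (isAddCyclic_of_injective _ hinj)

end

theorem sGluing_iff_directSum_general {n m : ℕ} (A : Fin m → (Fin n → ℤ))
    (E₁ E₂ : Set (Fin m)) (hcover : E₁ ∪ E₂ = Set.univ) :
    IsSGluing (A '' E₁) (A '' E₂) ↔
      IsDirectSum (posSpan (ratify '' (A '' E₁))) (posSpan (ratify '' (A '' E₂)))
        (posSpan (ratify '' Set.range A)) := by
  constructor
  · rintro ⟨a, ha, t, ht, hta₁, hta₂⟩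
    refine ⟨ratify a, ⟨ratify_mem_posSpan_of_zsmul_mem ht hta₁,
      ratify_mem_posSpan_of_zsmul_mem ht hta₂⟩, ?_, ?_⟩
    · rw [span_posSpan, span_posSpan]
      exact span_inf_span_eq_span_singleton_of_intSpan ha
    · rw [posSpan_union_posSpan, ← Set.image_union, ← Set.image_union, hcover, Set.image_univ]
  · rintro ⟨r, ⟨hr₁, hr₂⟩, hspan, -⟩
    rw [span_posSpan, span_posSpan] at hspan
    have hL : ∀ g ∈ intSpan (A '' E₁) ⊓ intSpan (A '' E₂), ratify g ∈ ℚ ∙ r :=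
      fun g hg => hspan ▸ ⟨ratify_mem_span hg.1, ratify_mem_span hg.2⟩
    obtain ⟨a, ha⟩ := exists_zmultiples_eq_of_ratify_mem_span_singleton _ r hL
    obtain ⟨M, hM, w, hw, hwr⟩ := exists_ratify_eq_nsmul_mem_inf
      (exists_ratify_eq_nsmul_of_mem_posSpan hr₁) (exists_ratify_eq_nsmul_of_mem_posSpan hr₂)
    have hwa : w ∈ AddSubgroup.zmultiples a :=
      ha ▸ ⟨natSpan_le_intSpan _ hw.1, natSpan_le_intSpan _ hw.2⟩
    have hw0 : w = 0 → a = 0 := by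
      rintro rfl
      have hr : r = 0 := by
        simpa [eq_comm, hM.ne'] using hwr
      simpa [hr] using hL a (ha ▸ AddSubgroup.mem_zmultiples a)
    obtain ⟨b, hb, t, ht, rfl⟩ := AddSubgroup.exists_zmultiples_eq_and_pos_zsmul_eq hwa hw0
    exact ⟨b, by rw [intSpan, ← AddSubgroup.zmultiples_eq_closure, hb, ha], t, ht, hw⟩

/-- `ℕA` is an s-gluing of `ℕA^{E₁}` and `ℕA^{E₂}` iff the cone of `A` is the
direct sum of the cones of `A^{E₁}` and `A^{E₂}`. -/
theorem sGluing_iff_directSum {n m : ℕ} (A : Fin m → (Fin n → ℤ))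
    (E₁ E₂ : Set (Fin m)) (hne₁ : E₁.Nonempty) (hne₂ : E₂.Nonempty)
    (hcover : E₁ ∪ E₂ = Set.univ) (hdisj : E₁ ∩ E₂ = ∅) :
    IsSGluing (A '' E₁) (A '' E₂) ↔
      IsDirectSum (posSpan (ratify '' (A '' E₁))) (posSpan (ratify '' (A '' E₂)))
        (posSpan (ratify '' Set.range A)) :=
  sGluing_iff_directSum_general A E₁ E₂ hcover
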